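/- Let P and Q be Borel probability measures on ℝ, let B_0 = (−1,1], B_m = (−2^m, 2^m] \ (−2^{m−1}, 2^{m−1}] for m ≥ 1, and for each m let 𝓡_{B_m}P be the pushforward of the normalized restriction P|_{B_m}/P(B_m) under x ↦ x/2^m (defined when P(B_m) > 0). Then for every p ≥ 1, W_p^p(P,Q) ≤ Σ_{m≥0} 2^{mp} [ 2^{p−1} |P(B_m) − Q(B_m)| + (P(B_m) ∧ Q(B_m)) · W_p^p(𝓡_{B_m}P, 𝓡_{B_m}Q) ]. -/

import Mathlib

open MeasureTheory ENNReal

/-- `WpPow p P Q`: the `p`-th power of the order-`p` Wasserstein distance,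
as the infimum over couplings of `∫ |x-y|^p dπ`. -/
noncomputable def WpPow (p : ℝ) (P Q : Measure ℝ) : ℝ≥0∞ :=
  ⨅ (π : Measure (ℝ × ℝ)) (_ : π.map Prod.fst = P) (_ : π.map Prod.snd = Q),
    ∫⁻ z, ENNReal.ofReal (|z.1 - z.2| ^ p) ∂π

/-- Dyadic annuli: `B 0 = (-1,1]`, `B m = (-2^m,2^m] \ (-2^(m-1),2^(m-1)]`. -/
def dyadicB : ℕ → Set ℝ
  | 0 => Set.Ioc (-1) 1
  | (m + 1) => Set.Ioc (-(2 : ℝ) ^ (m + 1)) ((2 : ℝ) ^ (m + 1)) \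
      Set.Ioc (-(2 : ℝ) ^ m) ((2 : ℝ) ^ m)

/-- `𝓡_{B_m} P`: the pushforward under `x ↦ x / 2^m` of the normalized
restriction of `P` to `B_m`. -/
noncomputable def rescaledRestrict (m : ℕ) (P : Measure ℝ) : Measure ℝ :=
  Measure.map (fun x => x / (2 : ℝ) ^ m) ((P (dyadicB m))⁻¹ • P.restrict (dyadicB m))

open ProbabilityTheory Set Function

/-!
The coupling is built annulus by annulus. On `B_m` a mass `P(B_m) ⊓ Q(B_m)` of the normalised
restrictions is transported by a near-optimal coupling of `𝓡_{B_m}P` and `𝓡_{B_m}Q`, dilated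
back by `2^m`; this costs `2^{mp}` times their `W_pᵖ`. What is left of `P` and of `Q` has the same
total mass and is coupled by the (normalised) product coupling. Since
`|x - y|ᵖ ≤ 2^{p-1} (|x|ᵖ + |y|ᵖ)` and `|x| ≤ 2^m` on `B_m`, the leftovers on `B_m`, of total
mass `|P(B_m) - Q(B_m)|`, contribute at most `2^{mp} 2^{p-1} |P(B_m) - Q(B_m)|`.
-/

lemma ENNReal.tsub_inf_add_tsub_inf {a b : ℝ≥0∞} (ha : a ≠ ∞) (hb : b ≠ ∞) :
    a - a ⊓ b + (b - a ⊓ b) = ENNReal.ofReal |a.toReal - b.toReal| := by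
  wlog h : a ≤ b generalizing a b
  · rw [inf_comm, add_comm, abs_sub_comm]
    exact this hb ha (le_of_not_ge h)
  rw [inf_eq_left.2 h, tsub_self, zero_add, abs_sub_comm,
    abs_of_nonneg (sub_nonneg.2 (toReal_mono hb h)), ← toReal_sub_of_le h hb,
    ofReal_toReal (sub_ne_top hb)]

lemma measurable_ofReal_abs_sub_rpow (p : ℝ) :
    Measurable fun z : ℝ × ℝ => ENNReal.ofReal (|z.1 - z.2| ^ p) := by
  fun_prop

section Wasserstein

variable {p : ℝ}

lemma WpPow_le_lintegral {P Q : Measure ℝ} (π : Measure (ℝ × ℝ))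
    (h₁ : π.map Prod.fst = P) (h₂ : π.map Prod.snd = Q) :
    WpPow p P Q ≤ ∫⁻ z, ENNReal.ofReal (|z.1 - z.2| ^ p) ∂π :=
  iInf_le_of_le π (iInf_le_of_le h₁ (iInf_le _ h₂))

lemma exists_coupling_lt_of_WpPow_lt {P Q : Measure ℝ} {r : ℝ≥0∞} (h : WpPow p P Q < r) :
    ∃ π : Measure (ℝ × ℝ), π.map Prod.fst = P ∧ π.map Prod.snd = Q ∧
      ∫⁻ z, ENNReal.ofReal (|z.1 - z.2| ^ p) ∂π < r := by
  simpa only [WpPow, iInf_lt_iff, exists_prop] using h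

@[simp]
lemma WpPow_zero_zero : WpPow p 0 0 = 0 :=
  nonpos_iff_eq_zero.1 <| (WpPow_le_lintegral 0 (by simp) (by simp)).trans_eq (by simp)

lemma WpPow_le_mul_of_forall_coupling {P Q P' Q' : Measure ℝ} {k : ℝ≥0∞} (hk₀ : k ≠ 0)
    (hk : k ≠ ∞) (h : ∀ π : Measure (ℝ × ℝ), π.map Prod.fst = P → π.map Prod.snd = Q →
      WpPow p P' Q' ≤ k * ∫⁻ z, ENNReal.ofReal (|z.1 - z.2| ^ p) ∂π) :
    WpPow p P' Q' ≤ k * WpPow p P Q := by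
  calc WpPow p P' Q'
      ≤ ⨅ (π : Measure (ℝ × ℝ)) (_ : π.map Prod.fst = P) (_ : π.map Prod.snd = Q),
          k * ∫⁻ z, ENNReal.ofReal (|z.1 - z.2| ^ p) ∂π := le_iInf fun π => le_iInf₂ (h π)
    _ = k * WpPow p P Q := by simp only [WpPow, ENNReal.mul_iInf_of_ne hk₀ hk]

lemma WpPow_sum_le {ι : Type*} [Countable ι] (P Q : ι → Measure ℝ) :
    WpPow p (Measure.sum P) (Measure.sum Q) ≤ ∑' i, WpPow p (P i) (Q i) := by
  refine ENNReal.le_of_forall_pos_le_add fun ε hε hfin => ?_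
  obtain ⟨δ, hδ, hδε⟩ := ENNReal.exists_pos_sum_of_countable (coe_ne_zero.2 hε.ne') ι
  have hlt (i : ι) : WpPow p (P i) (Q i) < WpPow p (P i) (Q i) + δ i :=
    ENNReal.lt_add_right (ENNReal.ne_top_of_tsum_ne_top hfin.ne i) (coe_ne_zero.2 (hδ i).ne')
  choose π hπ₁ hπ₂ hπcost using fun i => exists_coupling_lt_of_WpPow_lt (hlt i)
  have h₁ : (Measure.sum π).map Prod.fst = Measure.sum P := by
    simp [Measure.map_sum measurable_fst.aemeasurable, hπ₁]
  have h₂ : (Measure.sum π).map Prod.snd = Measure.sum Q := by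
    simp [Measure.map_sum measurable_snd.aemeasurable, hπ₂]
  calc WpPow p (Measure.sum P) (Measure.sum Q)
      ≤ ∑' i, ∫⁻ z, ENNReal.ofReal (|z.1 - z.2| ^ p) ∂π i :=
        (WpPow_le_lintegral _ h₁ h₂).trans_eq (lintegral_sum_measure _ _)
    _ ≤ ∑' i, (WpPow p (P i) (Q i) + δ i) := ENNReal.tsum_le_tsum fun i => (hπcost i).le
    _ ≤ ∑' i, WpPow p (P i) (Q i) + ε := by rw [ENNReal.tsum_add]; gcongr

lemma WpPow_add_le (P₁ P₂ Q₁ Q₂ : Measure ℝ) :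
    WpPow p (P₁ + P₂) (Q₁ + Q₂) ≤ WpPow p P₁ Q₁ + WpPow p P₂ Q₂ := by
  have h := WpPow_sum_le (p := p) (fun b => cond b P₁ P₂) (fun b => cond b Q₁ Q₂)
  rwa [Measure.sum_cond, Measure.sum_cond, tsum_fintype, Fintype.sum_bool] at h

lemma WpPow_smul_le (P Q : Measure ℝ) {c : ℝ≥0∞} (hc : c ≠ ∞) :
    WpPow p (c • P) (c • Q) ≤ c * WpPow p P Q := by
  rcases eq_or_ne c 0 with rfl | hc₀
  · simp
  refine WpPow_le_mul_of_forall_coupling hc₀ hc fun π h₁ h₂ => ?_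
  exact (WpPow_le_lintegral (c • π) (by rw [Measure.map_smul, h₁])
    (by rw [Measure.map_smul, h₂])).trans_eq (lintegral_smul_measure _ _)

lemma WpPow_map_const_mul_le (P Q : Measure ℝ) {r : ℝ} (hr : 0 < r) :
    WpPow p (P.map (r * ·)) (Q.map (r * ·)) ≤ ENNReal.ofReal (r ^ p) * WpPow p P Q := by
  have hmul : Measurable (r * · : ℝ → ℝ) := measurable_const_mul r
  have hprod : Measurable (Prod.map (r * ·) (r * ·) : ℝ × ℝ → ℝ × ℝ) := hmul.prodMap hmul
  refine WpPow_le_mul_of_forall_coupling (by simpa using Real.rpow_pos_of_pos hr p)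
    ofReal_ne_top fun π h₁ h₂ => ?_
  refine (WpPow_le_lintegral (π.map (Prod.map (r * ·) (r * ·)))
    (by rw [Measure.map_map measurable_fst hprod, ← h₁, Measure.map_map hmul measurable_fst]; rfl)
    (by rw [Measure.map_map measurable_snd hprod, ← h₂, Measure.map_map hmul measurable_snd]; rfl)
    ).trans_eq ?_
  rw [lintegral_map (measurable_ofReal_abs_sub_rpow p) hprod,
    ← lintegral_const_mul _ (measurable_ofReal_abs_sub_rpow p)]
  refine lintegral_congr fun z => ?_
  simp only [Prod.map_fst, Prod.map_snd, ← mul_sub, abs_mul, abs_of_pos hr]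
  rw [Real.mul_rpow hr.le (abs_nonneg _), ENNReal.ofReal_mul (by positivity)]

lemma ofReal_abs_sub_rpow_le (hp : 1 ≤ p) (x y : ℝ) :
    ENNReal.ofReal (|x - y| ^ p) ≤
      ENNReal.ofReal (2 ^ (p - 1)) * (ENNReal.ofReal (|x| ^ p) + ENNReal.ofReal (|y| ^ p)) := by
  have hp₀ : 0 ≤ p := zero_le_one.trans hp
  rw [← ofReal_rpow_of_nonneg (abs_nonneg _) hp₀, ← ofReal_rpow_of_nonneg (abs_nonneg _) hp₀,
    ← ofReal_rpow_of_nonneg (abs_nonneg _) hp₀, ← ofReal_rpow_of_pos two_pos, ofReal_ofNat]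
  calc ENNReal.ofReal |x - y| ^ p ≤ (ENNReal.ofReal |x| + ENNReal.ofReal |y|) ^ p := by
        gcongr
        rw [← ofReal_add (abs_nonneg _) (abs_nonneg _)]
        exact ofReal_le_ofReal (abs_sub _ _)
    _ ≤ _ := ENNReal.rpow_add_le_mul_rpow_add_rpow _ _ hp

/-- The product coupling, normalised by the common mass. -/
lemma WpPow_le_of_measure_univ_eq (hp : 1 ≤ p) (P Q : Measure ℝ) [IsFiniteMeasure P]
    [IsFiniteMeasure Q] (h : P univ = Q univ) :
    WpPow p P Q ≤ ENNReal.ofReal (2 ^ (p - 1)) *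
      (∫⁻ x, ENNReal.ofReal (|x| ^ p) ∂P + ∫⁻ y, ENNReal.ofReal (|y| ^ p) ∂Q) := by
  rcases eq_or_ne (P univ) 0 with h₀ | h₀
  · rw [Measure.measure_univ_eq_zero.1 h₀, Measure.measure_univ_eq_zero.1 (h.symm.trans h₀)]
    simp
  set D := P univ
  have hD : D⁻¹ * D = 1 := ENNReal.inv_mul_cancel h₀ (measure_ne_top P univ)
  have hf : Measurable fun x : ℝ => ENNReal.ofReal (|x| ^ p) := by fun_prop
  refine (WpPow_le_lintegral (D⁻¹ • P.prod Q)
    (by rw [Measure.map_smul, Measure.map_fst_prod, ← h, smul_smul, hD, one_smul])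
    (by rw [Measure.map_smul, Measure.map_snd_prod, smul_smul, hD, one_smul])).trans ?_
  calc ∫⁻ z, ENNReal.ofReal (|z.1 - z.2| ^ p) ∂(D⁻¹ • P.prod Q)
      ≤ D⁻¹ * ∫⁻ z, ENNReal.ofReal (2 ^ (p - 1)) *
          (ENNReal.ofReal (|z.1| ^ p) + ENNReal.ofReal (|z.2| ^ p)) ∂P.prod Q := by
        rw [lintegral_smul_measure, smul_eq_mul]
        gcongr with z
        exact ofReal_abs_sub_rpow_le hp z.1 z.2
    _ = D⁻¹ * (ENNReal.ofReal (2 ^ (p - 1)) *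
          (D * ∫⁻ x, ENNReal.ofReal (|x| ^ p) ∂P + D * ∫⁻ y, ENNReal.ofReal (|y| ^ p) ∂Q)) := by
        rw [lintegral_const_mul _ (by fun_prop), lintegral_add_left (by fun_prop),
          ← lintegral_map hf measurable_fst, ← lintegral_map hf measurable_snd,
          Measure.map_fst_prod, Measure.map_snd_prod, lintegral_smul_measure,
          lintegral_smul_measure, smul_eq_mul, smul_eq_mul, ← h]
    _ = (D⁻¹ * D) * (ENNReal.ofReal (2 ^ (p - 1)) *
          (∫⁻ x, ENNReal.ofReal (|x| ^ p) ∂P + ∫⁻ y, ENNReal.ofReal (|y| ^ p) ∂Q)) := by ring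
    _ = _ := by rw [hD, one_mul]

end Wasserstein

section Partition

variable {α ι : Type*} [MeasurableSpace α] {μ ν : Measure α} {s : ι → Set α}

lemma measure_smul_cond (μ : Measure α) [IsFiniteMeasure μ] (t : Set α) :
    μ t • μ[|t] = μ.restrict t := by
  rcases eq_or_ne (μ t) 0 with h | h
  · simp [Measure.restrict_eq_zero.2 h, h]
  · rw [ProbabilityTheory.cond, smul_smul, ENNReal.mul_inv_cancel h (measure_ne_top μ t), one_smul]

lemma lintegral_cond_le_of_forall_le {t : Set α} (ht : MeasurableSet t) {f : α → ℝ≥0∞}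
    {C : ℝ≥0∞} (hf : ∀ x ∈ t, f x ≤ C) : ∫⁻ x, f x ∂μ[|t] ≤ C :=
  calc ∫⁻ x, f x ∂μ[|t] ≤ ∫⁻ _, C ∂μ[|t] := lintegral_mono_ae ((ae_cond_mem ht).mono hf)
    _ = C * ((μ t)⁻¹ * μ t) := by rw [lintegral_const, cond_apply ht, inter_univ]
    _ ≤ C := mul_le_of_le_one_right' (ENNReal.inv_mul_le_one _)

lemma measure_univ_sum_smul_cond [IsFiniteMeasure μ] {c : ι → ℝ≥0∞}
    (hc : ∀ i, c i ≤ μ (s i)) : Measure.sum (fun i => c i • μ[|s i]) univ = ∑' i, c i := by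
  rw [Measure.sum_apply _ MeasurableSet.univ]
  refine tsum_congr fun i => ?_
  rcases eq_or_ne (μ (s i)) 0 with h | h
  · simp [nonpos_iff_eq_zero.1 (h ▸ hc i)]
  · have := cond_isProbabilityMeasure h
    simp

lemma sum_smul_cond_add_sum_smul_cond [Countable ι] (hs : ∀ i, MeasurableSet (s i))
    (hd : Pairwise (Disjoint on s)) (hU : ⋃ i, s i = univ) (μ : Measure α) [IsFiniteMeasure μ]
    {c : ι → ℝ≥0∞} (hc : ∀ i, c i ≤ μ (s i)) :
    Measure.sum (fun i => c i • μ[|s i]) + Measure.sum (fun i => (μ (s i) - c i) • μ[|s i]) =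
      μ := by
  simp_rw [Measure.sum_add_sum, ← add_smul, add_tsub_cancel_of_le (hc _), measure_smul_cond]
  rw [← Measure.restrict_iUnion hd hs, hU, Measure.restrict_univ]

lemma measure_univ_sum_smul_cond_tsub_eq [Countable ι] (hs : ∀ i, MeasurableSet (s i))
    (hd : Pairwise (Disjoint on s)) (hU : ⋃ i, s i = univ) [IsFiniteMeasure μ] [IsFiniteMeasure ν]
    (hμν : μ univ = ν univ) {c : ι → ℝ≥0∞} (hcμ : ∀ i, c i ≤ μ (s i))
    (hcν : ∀ i, c i ≤ ν (s i)) :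
    Measure.sum (fun i => (μ (s i) - c i) • μ[|s i]) univ =
      Measure.sum (fun i => (ν (s i) - c i) • ν[|s i]) univ := by
  have hμ := congrArg (· univ) (sum_smul_cond_add_sum_smul_cond hs hd hU μ hcμ)
  have hν := congrArg (· univ) (sum_smul_cond_add_sum_smul_cond hs hd hU ν hcν)
  simp only [Measure.coe_add, Pi.add_apply] at hμ hν
  rw [measure_univ_sum_smul_cond hcμ] at hμ
  rw [measure_univ_sum_smul_cond hcν] at hν
  have hc : ∑' i, c i ≠ ∞ := ne_top_of_le_ne_top (measure_ne_top μ univ) (hμ ▸ le_self_add)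
  exact (ENNReal.add_right_inj hc).1 (hμ.trans (hμν.trans hν.symm))

end Partition

section DyadicAnnuli

lemma measurableSet_dyadicB (m : ℕ) : MeasurableSet (dyadicB m) := by
  cases m with
  | zero => exact measurableSet_Ioc
  | succ n => exact measurableSet_Ioc.diff measurableSet_Ioc

lemma dyadicB_subset_Ioc {m k : ℕ} (h : m ≤ k) :
    dyadicB m ⊆ Ioc (-(2 : ℝ) ^ k) ((2 : ℝ) ^ k) := by
  have hpow : (2 : ℝ) ^ m ≤ 2 ^ k := pow_le_pow_right₀ one_le_two h
  refine Subset.trans ?_ (Ioc_subset_Ioc (neg_le_neg hpow) hpow)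
  cases m with
  | zero => simp [dyadicB]
  | succ n => exact sdiff_subset

lemma abs_le_of_mem_dyadicB {m : ℕ} {x : ℝ} (hx : x ∈ dyadicB m) : |x| ≤ 2 ^ m :=
  abs_le.2 ⟨(dyadicB_subset_Ioc le_rfl hx).1.le, (dyadicB_subset_Ioc le_rfl hx).2⟩

lemma pairwise_disjoint_dyadicB : Pairwise (Disjoint on dyadicB) := by
  refine (pairwise_disjoint_on dyadicB).2 fun m n hmn => ?_
  obtain ⟨k, rfl⟩ := Nat.exists_eq_add_of_lt hmn
  exact disjoint_left.2 fun x hm hn => hn.2 (dyadicB_subset_Ioc (by omega) hm)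

lemma iUnion_dyadicB : ⋃ m, dyadicB m = univ := by
  refine eq_univ_of_forall fun x => ?_
  have hex : ∃ n : ℕ, x ∈ Ioc (-(2 : ℝ) ^ n) (2 ^ n) := by
    obtain ⟨n, hn⟩ := pow_unbounded_of_one_lt |x| one_lt_two
    exact ⟨n, by linarith [neg_abs_le x], (le_abs_self x).trans hn.le⟩
  have hspec := Nat.find_spec hex
  have hmin : ∀ k < Nat.find hex, x ∉ Ioc (-(2 : ℝ) ^ k) (2 ^ k) := fun k => Nat.find_min hex
  refine mem_iUnion.2 ⟨Nat.find hex, ?_⟩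
  generalize Nat.find hex = n at hspec hmin ⊢
  cases n with
  | zero => simpa [dyadicB] using hspec
  | succ n => exact ⟨hspec, hmin n n.lt_succ_self⟩

variable {p : ℝ}

lemma lintegral_rpow_cond_dyadicB_le (hp : 0 ≤ p) (P : Measure ℝ) (m : ℕ) :
    ∫⁻ x, ENNReal.ofReal (|x| ^ p) ∂P[|dyadicB m] ≤ ENNReal.ofReal (2 ^ ((m : ℝ) * p)) :=
  lintegral_cond_le_of_forall_le (measurableSet_dyadicB m) fun x hx => ofReal_le_ofReal <| by
    rw [Real.rpow_natCast_mul zero_le_two]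
    exact Real.rpow_le_rpow (abs_nonneg x) (abs_le_of_mem_dyadicB hx) hp

lemma lintegral_rpow_sum_smul_cond_dyadicB_le (hp : 0 ≤ p) (P : Measure ℝ) (w : ℕ → ℝ≥0∞) :
    ∫⁻ x, ENNReal.ofReal (|x| ^ p) ∂Measure.sum (fun m => w m • P[|dyadicB m]) ≤
      ∑' m : ℕ, w m * ENNReal.ofReal (2 ^ ((m : ℝ) * p)) := by
  rw [lintegral_sum_measure]
  refine ENNReal.tsum_le_tsum fun m => ?_
  rw [lintegral_smul_measure, smul_eq_mul]
  gcongr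
  exact lintegral_rpow_cond_dyadicB_le hp P m

lemma map_const_mul_rescaledRestrict (m : ℕ) (P : Measure ℝ) :
    (rescaledRestrict m P).map ((2 : ℝ) ^ m * ·) = P[|dyadicB m] := by
  change ((P[|dyadicB m]).map (· / (2 : ℝ) ^ m)).map ((2 : ℝ) ^ m * ·) = _
  rw [Measure.map_map (measurable_const_mul _) (measurable_div_const _)]
  convert Measure.map_id
  ext x
  simp [mul_div_cancel₀]

lemma WpPow_cond_dyadicB_le (P Q : Measure ℝ) (m : ℕ) :
    WpPow p P[|dyadicB m] Q[|dyadicB m] ≤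
      ENNReal.ofReal (2 ^ ((m : ℝ) * p)) *
        WpPow p (rescaledRestrict m P) (rescaledRestrict m Q) := by
  rw [← map_const_mul_rescaledRestrict, ← map_const_mul_rescaledRestrict,
    Real.rpow_natCast_mul zero_le_two]
  exact WpPow_map_const_mul_le _ _ (by positivity)

lemma WpPow_sum_smul_cond_dyadicB_le (P Q : Measure ℝ) {c : ℕ → ℝ≥0∞} (hc : ∀ m, c m ≠ ∞) :
    WpPow p (Measure.sum fun m => c m • P[|dyadicB m])
        (Measure.sum fun m => c m • Q[|dyadicB m]) ≤
      ∑' m : ℕ, ENNReal.ofReal (2 ^ ((m : ℝ) * p)) *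
        (c m * WpPow p (rescaledRestrict m P) (rescaledRestrict m Q)) := by
  refine (WpPow_sum_le _ _).trans (ENNReal.tsum_le_tsum fun m => ?_)
  calc WpPow p (c m • P[|dyadicB m]) (c m • Q[|dyadicB m])
      ≤ c m * WpPow p P[|dyadicB m] Q[|dyadicB m] := WpPow_smul_le _ _ (hc m)
    _ ≤ c m * (ENNReal.ofReal (2 ^ ((m : ℝ) * p)) *
          WpPow p (rescaledRestrict m P) (rescaledRestrict m Q)) := by
        gcongr
        exact WpPow_cond_dyadicB_le P Q m
    _ = _ := mul_left_comm _ _ _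

lemma WpPow_sum_smul_cond_dyadicB_tsub_le (hp : 1 ≤ p) (P Q : Measure ℝ)
    [IsProbabilityMeasure P] [IsProbabilityMeasure Q] :
    WpPow p (Measure.sum fun m => (P (dyadicB m) - P (dyadicB m) ⊓ Q (dyadicB m)) • P[|dyadicB m])
        (Measure.sum fun m => (Q (dyadicB m) - P (dyadicB m) ⊓ Q (dyadicB m)) • Q[|dyadicB m]) ≤
      ∑' m : ℕ, ENNReal.ofReal (2 ^ ((m : ℝ) * p)) * ENNReal.ofReal (2 ^ (p - 1) *
        |(P (dyadicB m)).toReal - (Q (dyadicB m)).toReal|) := by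
  have hp₀ : 0 ≤ p := zero_le_one.trans hp
  set c : ℕ → ℝ≥0∞ := fun m => P (dyadicB m) ⊓ Q (dyadicB m)
  have hcP (m : ℕ) : c m ≤ P (dyadicB m) := inf_le_left
  have hcQ (m : ℕ) : c m ≤ Q (dyadicB m) := inf_le_right
  have := isFiniteMeasure_of_le P (Measure.le_add_left le_rfl |>.trans_eq
    (sum_smul_cond_add_sum_smul_cond measurableSet_dyadicB pairwise_disjoint_dyadicB
      iUnion_dyadicB P hcP))
  have := isFiniteMeasure_of_le Q (Measure.le_add_left le_rfl |>.trans_eq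
    (sum_smul_cond_add_sum_smul_cond measurableSet_dyadicB pairwise_disjoint_dyadicB
      iUnion_dyadicB Q hcQ))
  refine (WpPow_le_of_measure_univ_eq hp _ _ (measure_univ_sum_smul_cond_tsub_eq
    measurableSet_dyadicB pairwise_disjoint_dyadicB iUnion_dyadicB (by simp) hcP hcQ)).trans ?_
  grw [lintegral_rpow_sum_smul_cond_dyadicB_le hp₀, lintegral_rpow_sum_smul_cond_dyadicB_le hp₀,
    ← ENNReal.tsum_add, ← ENNReal.tsum_mul_left]
  refine le_of_eq (tsum_congr fun m => ?_)
  rw [ENNReal.ofReal_mul (by positivity), ← ENNReal.tsub_inf_add_tsub_inf (measure_ne_top P _)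
    (measure_ne_top Q _)]
  ring

end DyadicAnnuli

/-- For Borel probability measures `P, Q` on `ℝ` and `p ≥ 1`,
`W_p^p(P,Q) ≤ ∑_m 2^{mp} [2^{p-1} |P(B_m)-Q(B_m)|
  + (P(B_m) ∧ Q(B_m)) W_p^p(𝓡_{B_m}P, 𝓡_{B_m}Q)]`. -/
theorem WpPow_le_annuli_decomposition (p : ℝ) (hp : 1 ≤ p)
    (P Q : Measure ℝ) [IsProbabilityMeasure P] [IsProbabilityMeasure Q] :
    WpPow p P Q ≤ ∑' m : ℕ, ENNReal.ofReal ((2 : ℝ) ^ ((m : ℝ) * p)) *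
      (ENNReal.ofReal ((2 : ℝ) ^ (p - 1) *
          |(P (dyadicB m)).toReal - (Q (dyadicB m)).toReal|)
        + (P (dyadicB m) ⊓ Q (dyadicB m)) *
            WpPow p (rescaledRestrict m P) (rescaledRestrict m Q)) := by
  have hP := sum_smul_cond_add_sum_smul_cond measurableSet_dyadicB pairwise_disjoint_dyadicB
    iUnion_dyadicB P fun m => (inf_le_left : P (dyadicB m) ⊓ Q (dyadicB m) ≤ _)
  have hQ := sum_smul_cond_add_sum_smul_cond measurableSet_dyadicB pairwise_disjoint_dyadicB
    iUnion_dyadicB Q fun m => (inf_le_right : P (dyadicB m) ⊓ Q (dyadicB m) ≤ _)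
  have h := (WpPow_add_le (p := p) _ _ _ _).trans <| add_le_add
    (WpPow_sum_smul_cond_dyadicB_le P Q (c := fun m => P (dyadicB m) ⊓ Q (dyadicB m))
      fun m => ne_top_of_le_ne_top (measure_ne_top P _) inf_le_left)
    (WpPow_sum_smul_cond_dyadicB_tsub_le hp P Q)
  rw [hP, hQ, ← ENNReal.tsum_add] at h
  exact h.trans_eq (tsum_congr fun m => by ring)
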